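/- arXiv:1711.10194 — 6 statements merged into one kernel-verified Lean document; each statement's English description precedes it below -/
import Mathlib

section
/- Let φ: [k]^op → Δ be a functor. For every interval [x;x'] of M_φ, the subset κ̄_φ[x;x'] of Ω_φ is order-convex (if ω ≤ τ ≤ ω' in Ω_φ with ω, ω' ∈ κ̄_φ[x;x'], then τ ∈ κ̄_φ[x;x']); equivalently, the set Pyr(κ̄_φ[x;x']) := {[ω;ω'] ∈ Pyr(Ω_φ) : ω ∈ κ̄_φ[x;x'] and ω' ∈ κ̄_φ[x;x']} is an upper set of the poset Pyr(Ω_φ). Consequently the assignment [x;x'] ↦ Pyr(κ̄_φ[x;x']) is a monotone map from the poset of intervals of M_φ ordered by inclusion to the poset of upper sets of Pyr(Ω_φ) ordered by inclusion. -/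
open CategoryTheory Opposite

/-- The fibre of a simplicial shape functor `φ : [k]ᵒᵖ ⥤ Δ` at `b`, i.e. the linear
order `φ(b) = {0 < ⋯ < φ(b).len}`. -/
abbrev fib {k : ℕ} (φ : (Fin (k+1))ᵒᵖ ⥤ SimplexCategory) (b : Fin (k+1)) :=
  Fin ((φ.obj (op b)).len + 1)

/-- The transition map `φ_{b,b'} : φ(b) → φ(b')` associated to `b ≤ b'` in `[k]ᵒᵖ`,
i.e. to `b' ≤ b` in `[k]`. -/
def tmap {k : ℕ} (φ : (Fin (k+1))ᵒᵖ ⥤ SimplexCategory) {b b' : Fin (k+1)} (h : b' ≤ b) :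
    fib φ b →o fib φ b' :=
  (φ.map (homOfLE h).op).toOrderHom

lemma tmap_refl {k : ℕ} (φ : (Fin (k+1))ᵒᵖ ⥤ SimplexCategory) {b : Fin (k+1)}
    (h : b ≤ b) (z : fib φ b) : tmap φ h z = z := by
  have e : (homOfLE h).op = 𝟙 (op b) := rfl
  simp only [tmap, e, φ.map_id]
  rfl

lemma tmap_trans {k : ℕ} (φ : (Fin (k+1))ᵒᵖ ⥤ SimplexCategory) {b b' b'' : Fin (k+1)}
    (h1 : b' ≤ b) (h2 : b'' ≤ b') (z : fib φ b) :
    tmap φ (h2.trans h1) z = tmap φ h2 (tmap φ h1 z) := by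
  have e : (homOfLE (h2.trans h1)).op = (homOfLE h1).op ≫ (homOfLE h2).op := rfl
  simp only [tmap, e, φ.map_comp]
  rfl

/-- The underlying type of the poset `M_φ`. -/
def Mpt {k : ℕ} (φ : (Fin (k+1))ᵒᵖ ⥤ SimplexCategory) : Type :=
  Σ b : Fin (k+1), fib φ b

/-- The order relation of `M_φ`: `(a,b) ≤ (a',b')` iff `b ≤ b'` in `[k]ᵒᵖ` and
`φ_{b,b'}(a) ≤ a'`. -/
def Mrel {k : ℕ} (φ : (Fin (k+1))ᵒᵖ ⥤ SimplexCategory) (x y : Mpt φ) : Prop :=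
  ∃ h : y.1 ≤ x.1, tmap φ h x.2 ≤ y.2

instance {k : ℕ} (φ : (Fin (k+1))ᵒᵖ ⥤ SimplexCategory) : PartialOrder (Mpt φ) where
  le := Mrel φ
  le_refl x := ⟨le_refl _, by rw [tmap_refl]⟩
  le_trans x y z := by
    rintro ⟨h1, g1⟩ ⟨h2, g2⟩
    exact ⟨h2.trans h1, by
      rw [tmap_trans φ h1 h2]
      exact le_trans ((tmap φ h2).monotone g1) g2⟩
  le_antisymm := by
    rintro ⟨b, a⟩ ⟨b', a'⟩ ⟨h1, g1⟩ ⟨h2, g2⟩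
    obtain rfl : b = b' := le_antisymm h2 h1
    obtain rfl : a = a' := le_antisymm (by
        rw [tmap_refl φ h1 a] at g1; exact g1) (by
        rw [tmap_refl φ h2 a'] at g2; exact g2)
    rfl

/-- For a poset `X`, `Pyr X` is the poset of (nonempty closed) intervals `[x;x']` of `X`,
with `[x;x'] ≤ [y;y']` iff `x ≤ y` and `y' ≤ x'`. -/
def Pyr (X : Type*) [Preorder X] : Type _ := {p : X × X // p.1 ≤ p.2}

instance {X : Type*} [PartialOrder X] : PartialOrder (Pyr X) where
  le I J := I.val.1 ≤ J.val.1 ∧ J.val.2 ≤ I.val.2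
  le_refl I := ⟨le_refl _, le_refl _⟩
  le_trans I J K h1 h2 := ⟨h1.1.trans h2.1, h2.2.trans h1.2⟩
  le_antisymm I J h1 h2 :=
    Subtype.ext (Prod.ext (le_antisymm h1.1 h2.1) (le_antisymm h2.2 h1.2))

/-- The underlying type of the poset `Ω_φ`: pairs `([i;j], b)` with `[i;j]` an interval
of `φ(b)`. -/
def Opt {k : ℕ} (φ : (Fin (k+1))ᵒᵖ ⥤ SimplexCategory) : Type :=
  Σ b : Fin (k+1), Pyr (fib φ b)

/-- The order relation of `Ω_φ`. -/
def Orel {k : ℕ} (φ : (Fin (k+1))ᵒᵖ ⥤ SimplexCategory) (x y : Opt φ) : Prop :=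
  ∃ h : y.1 ≤ x.1, tmap φ h x.2.val.1 ≤ y.2.val.1 ∧ y.2.val.2 ≤ tmap φ h x.2.val.2

instance {k : ℕ} (φ : (Fin (k+1))ᵒᵖ ⥤ SimplexCategory) : PartialOrder (Opt φ) where
  le := Orel φ
  le_refl x := ⟨le_refl _, by rw [tmap_refl], by rw [tmap_refl]⟩
  le_trans x y z := by
    rintro ⟨h1, g1, g1'⟩ ⟨h2, g2, g2'⟩
    refine ⟨h2.trans h1, ?_, ?_⟩
    · rw [tmap_trans φ h1 h2]
      exact le_trans ((tmap φ h2).monotone g1) g2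
    · rw [tmap_trans φ h1 h2]
      exact le_trans g2' ((tmap φ h2).monotone g1')
  le_antisymm := by
    rintro ⟨b, I⟩ ⟨b', I'⟩ ⟨h1, g1, g1'⟩ ⟨h2, g2, g2'⟩
    obtain rfl : b = b' := le_antisymm h2 h1
    rw [tmap_refl φ h1 I.val.1] at g1
    rw [tmap_refl φ h1 I.val.2] at g1'
    rw [tmap_refl φ h2 I'.val.1] at g2
    rw [tmap_refl φ h2 I'.val.2] at g2'
    obtain rfl : I = I' :=
      Subtype.ext (Prod.ext (le_antisymm g1 g2) (le_antisymm g2' g1'))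
    rfl

/-- The subset `κ̄_φ[(a,b);(a',b')]` of `Ω_φ`: those `([i;j],c)` with `b ≤ c ≤ b'` in
`[k]ᵒᵖ`, `φ_{b,c}(a) ≤ i` and `φ_{c,b'}(j) ≤ a'`. -/
def kbar {k : ℕ} (φ : (Fin (k+1))ᵒᵖ ⥤ SimplexCategory) (x x' : Mpt φ) : Set (Opt φ) :=
  {ω | ∃ (h1 : ω.1 ≤ x.1) (h2 : x'.1 ≤ ω.1),
    tmap φ h1 x.2 ≤ ω.2.val.1 ∧ tmap φ h2 ω.2.val.2 ≤ x'.2}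

/-- The set `Pyr(κ̄_φ[x;x'])` of intervals of `Ω_φ` with both endpoints in `κ̄_φ[x;x']`. -/
def pyrKbar {k : ℕ} (φ : (Fin (k+1))ᵒᵖ ⥤ SimplexCategory) (x x' : Mpt φ) :
    Set (Pyr (Opt φ)) :=
  {I | I.val.1 ∈ kbar φ x x' ∧ I.val.2 ∈ kbar φ x x'}

/-- For every interval `[x;x']` of `M_φ`, the subset `κ̄_φ[x;x']` of
`Ω_φ` is order-convex; equivalently `Pyr(κ̄_φ[x;x'])` is an upper set of `Pyr(Ω_φ)`.
Consequently `[x;x'] ↦ Pyr(κ̄_φ[x;x'])` is monotone from intervals of `M_φ` ordered by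
inclusion to upper sets of `Pyr(Ω_φ)` ordered by inclusion. -/
theorem statement4 (k : ℕ) (φ : (Fin (k+1))ᵒᵖ ⥤ SimplexCategory) :
    (∀ x x' : Mpt φ, x ≤ x' →
      ∀ ω τ ω' : Opt φ, ω ∈ kbar φ x x' → ω' ∈ kbar φ x x' → ω ≤ τ → τ ≤ ω' →
        τ ∈ kbar φ x x') ∧
    (∀ x x' : Mpt φ, x ≤ x' → IsUpperSet (pyrKbar φ x x')) ∧
    (∀ x x' y y' : Mpt φ, x ≤ x' → y ≤ y' → y ≤ x → x' ≤ y' →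
      pyrKbar φ x x' ⊆ pyrKbar φ y y') := by
  have key : ∀ x x' : Mpt φ, x ≤ x' →
      ∀ ω τ ω' : Opt φ, ω ∈ kbar φ x x' → ω' ∈ kbar φ x x' → ω ≤ τ → τ ≤ ω' →
        τ ∈ kbar φ x x' := by
    rintro x x' _ ω τ ω' ⟨h1, h2, g1, g2⟩ ⟨h1', h2', g1', g2'⟩ ⟨e1, f1, f1'⟩ ⟨e2, f2, f2'⟩
    refine ⟨e1.trans h1, h2'.trans e2, ?_, ?_⟩
    · calc tmap φ (e1.trans h1) x.2 = tmap φ e1 (tmap φ h1 x.2) := tmap_trans φ h1 e1 x.2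
        _ ≤ tmap φ e1 ω.2.val.1 := (tmap φ e1).monotone g1
        _ ≤ τ.2.val.1 := f1
    · calc tmap φ (h2'.trans e2) τ.2.val.2
          ≤ tmap φ (h2'.trans e2) (tmap φ e1 ω.2.val.2) := (tmap φ _).monotone f1'
        _ = tmap φ ((h2'.trans e2).trans e1) ω.2.val.2 := (tmap_trans φ e1 (h2'.trans e2) _).symm
        _ = tmap φ h2 ω.2.val.2 := rfl
        _ ≤ x'.2 := g2
  have mono : ∀ x x' y y' : Mpt φ, y ≤ x → x' ≤ y' → kbar φ x x' ⊆ kbar φ y y' := by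
    rintro x x' y y' ⟨hy, gy⟩ ⟨hy', gy'⟩ ω ⟨h1, h2, g1, g2⟩
    refine ⟨h1.trans hy, hy'.trans h2, ?_, ?_⟩
    · calc tmap φ (h1.trans hy) y.2 = tmap φ h1 (tmap φ hy y.2) := tmap_trans φ hy h1 y.2
        _ ≤ tmap φ h1 x.2 := (tmap φ h1).monotone gy
        _ ≤ ω.2.val.1 := g1
    · calc tmap φ (hy'.trans h2) ω.2.val.2
          = tmap φ hy' (tmap φ h2 ω.2.val.2) := tmap_trans φ h2 hy' _
        _ ≤ tmap φ hy' x'.2 := (tmap φ hy').monotone g2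
        _ ≤ y'.2 := gy'
  refine ⟨key, ?_, ?_⟩
  · rintro x x' hxx' I J ⟨le1, le2⟩ ⟨m1, m2⟩
    exact ⟨key x x' hxx' I.val.1 J.val.1 I.val.2 m1 m2 le1 (J.prop.trans le2),
           key x x' hxx' I.val.1 J.val.2 I.val.2 m1 m2 (le1.trans J.prop) le2⟩
  · rintro x x' y y' _ _ hyx hxy' I ⟨m1, m2⟩
    exact ⟨mono x x' y y' hyx hxy' m1, mono x x' y y' hyx hxy' m2⟩
end

section
/- In the category Alg, every cospan admits a pseudo-pullback, unique up to unique isomorphism: for any morphisms p: X → Y and q: Y' → Y in Alg there exist an object X' and morphisms p': X' → Y' and q': X' → X forming a pseudo-pullback square over (p, q); and given two pseudo-pullback squares over the same cospan, with apexes X'₁ and X'₂, there is a unique isomorphism X'₁ ≅ X'₂ in Alg commuting with the projections to X and to Y'. -/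
/-- A morphism of the category `Alg`: a function `toFun : X → Y` together with a linear
order on each fibre, encoded as a relation `le` which only relates elements of the same
fibre and restricts to a linear order on each fibre. -/
structure AlgMor (X Y : Type) : Type where
  toFun : X → Y
  le : X → X → Prop
  le_fib : ∀ {x x'}, le x x' → toFun x = toFun x'
  le_refl : ∀ x, le x x
  le_trans : ∀ {x y z}, le x y → le y z → le x z
  le_antisymm : ∀ {x y}, le x y → le y x → x = y
  le_total : ∀ {x y}, toFun x = toFun y → le x y ∨ le y x

/-- Composition in `Alg`: the composite function, with each fibre of the composite
ordered lexicographically (first by the `q`-fibre order on images, then by the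
`p`-fibre order). -/
def AlgMor.comp {X Y Z : Type} (p : AlgMor X Y) (q : AlgMor Y Z) : AlgMor X Z where
  toFun x := q.toFun (p.toFun x)
  le x x' := (p.toFun x ≠ p.toFun x' ∧ q.le (p.toFun x) (p.toFun x')) ∨
    (p.toFun x = p.toFun x' ∧ p.le x x')
  le_fib := by
    rintro x x' (⟨h1, h2⟩ | ⟨h1, h2⟩)
    · exact q.le_fib h2
    · exact congrArg q.toFun h1
  le_refl x := Or.inr ⟨rfl, p.le_refl x⟩
  le_trans := by
    rintro x y z (⟨h1, h2⟩ | ⟨h1, h2⟩) (⟨g1, g2⟩ | ⟨g1, g2⟩)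
    · refine Or.inl ⟨fun e => g1 ?_, q.le_trans h2 g2⟩
      rw [← e] at g2
      rw [← q.le_antisymm h2 g2]
      exact e
    · exact Or.inl ⟨by rw [← g1]; exact h1, by rw [← g1]; exact h2⟩
    · exact Or.inl ⟨by rw [h1]; exact g1, by rw [h1]; exact g2⟩
    · exact Or.inr ⟨h1.trans g1, p.le_trans h2 g2⟩
  le_antisymm := by
    rintro x y (⟨h1, h2⟩ | ⟨h1, h2⟩) (⟨g1, g2⟩ | ⟨g1, g2⟩)
    · exact absurd (q.le_antisymm h2 g2) h1
    · exact absurd g1.symm h1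
    · exact absurd h1.symm g1
    · exact p.le_antisymm h2 g2
  le_total := by
    intro x y h
    by_cases hp : p.toFun x = p.toFun y
    · rcases p.le_total hp with h' | h'
      · exact Or.inl (Or.inr ⟨hp, h'⟩)
      · exact Or.inr (Or.inr ⟨hp.symm, h'⟩)
    · rcases q.le_total h with h' | h'
      · exact Or.inl (Or.inl ⟨hp, h'⟩)
      · exact Or.inr (Or.inl ⟨Ne.symm hp, h'⟩)

/-- The identity morphism of `Alg` (singleton fibres, trivially ordered). -/
def AlgMor.id (X : Type) : AlgMor X X where
  toFun := _root_.id
  le x y := x = y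
  le_fib h := congrArg _ h
  le_refl _ := rfl
  le_trans h g := h.trans g
  le_antisymm h _ := h
  le_total h := Or.inl h

/-- `e` is an isomorphism of `Alg`: it has a two-sided inverse. -/
def AlgMor.IsIso {X Y : Type} (e : AlgMor X Y) : Prop :=
  ∃ f : AlgMor Y X, e.comp f = AlgMor.id X ∧ f.comp e = AlgMor.id Y

/-- A (not necessarily commuting) square in `Alg` with legs `p' : X' → Y'`,
`q' : X' → X` over the cospan `p : X → Y`, `q : Y' → Y` is a pseudo-pullback square:
(1) the underlying square of finite sets commutes and is a pullback square;
(2) for each `x ∈ X`, the induced map `(q')⁻¹(x) → q⁻¹(p(x))` is an isomorphism of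
linearly ordered sets; and
(3) for each `y ∈ Y'`, the induced map `(p')⁻¹(y) → p⁻¹(q(y))` is an isomorphism of
linearly ordered sets. -/
structure IsPseudoPullback {X Y Y' X' : Type} (p : AlgMor X Y) (q : AlgMor Y' Y)
    (p' : AlgMor X' Y') (q' : AlgMor X' X) : Prop where
  comm : ∀ w, q.toFun (p'.toFun w) = p.toFun (q'.toFun w)
  pullback : ∀ (x : X) (y' : Y'), p.toFun x = q.toFun y' →
    ∃! w : X', q'.toFun w = x ∧ p'.toFun w = y'
  fib_left : ∀ {w w' : X'}, q'.toFun w = q'.toFun w' →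
    (q'.le w w' ↔ q.le (p'.toFun w) (p'.toFun w'))
  fib_right : ∀ {w w' : X'}, p'.toFun w = p'.toFun w' →
    (p'.le w w' ↔ p.le (q'.toFun w) (q'.toFun w'))


theorem AlgMor.ext' {X Y : Type} {f g : AlgMor X Y} (h1 : f.toFun = g.toFun)
    (h2 : f.le = g.le) : f = g := by
  cases f; cases g; cases h1; cases h2; rfl

/-- Injectivity of the structure map of a pseudo-pullback apex into the product. -/
theorem pb_inj {X Y Y' X' : Type} {p : AlgMor X Y} {q : AlgMor Y' Y}
    {p' : AlgMor X' Y'} {q' : AlgMor X' X} (h : IsPseudoPullback p q p' q')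
    {a b : X'} (hq : q'.toFun a = q'.toFun b) (hp : p'.toFun a = p'.toFun b) :
    a = b := by
  obtain ⟨w, _, hu⟩ := h.pullback (q'.toFun a) (p'.toFun a) (h.comm a).symm
  exact (hu a ⟨rfl, rfl⟩).trans (hu b ⟨hq.symm, hp.symm⟩).symm

/-- The canonical comparison map between two pseudo-pullbacks of the same cospan. -/
theorem pb_map {X Y Y' X₁ X₂ : Type} {p : AlgMor X Y} {q : AlgMor Y' Y}
    {p₁ : AlgMor X₁ Y'} {q₁ : AlgMor X₁ X} {p₂ : AlgMor X₂ Y'} {q₂ : AlgMor X₂ X}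
    (h₁ : IsPseudoPullback p q p₁ q₁) (h₂ : IsPseudoPullback p q p₂ q₂) :
    ∃ e : AlgMor X₁ X₂, (∀ w, q₂.toFun (e.toFun w) = q₁.toFun w) ∧
      (∀ w, p₂.toFun (e.toFun w) = p₁.toFun w) ∧
      (e.le = fun a b => a = b) := by
  have key : ∀ w : X₁, ∃! w₂ : X₂, q₂.toFun w₂ = q₁.toFun w ∧ p₂.toFun w₂ = p₁.toFun w :=
    fun w => h₂.pullback (q₁.toFun w) (p₁.toFun w) (h₁.comm w).symm
  choose f hf _ using fun w => key w
  have hinj : Function.Injective f := by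
    intro a b hab
    exact pb_inj h₁ (((hf a).1.symm.trans (hab ▸ (hf b).1)))
      (((hf a).2.symm.trans (hab ▸ (hf b).2)))
  refine ⟨⟨f, fun a b => a = b, fun h => congrArg f h, fun _ => rfl,
    fun h g => h.trans g, fun h _ => h, fun h => Or.inl (hinj h)⟩,
    fun w => (hf w).1, fun w => (hf w).2, rfl⟩

theorem AlgMor.comp_eq_of {X₁ X₂ W : Type} (e : AlgMor X₁ X₂) (r₁ : AlgMor X₁ W)
    (r₂ : AlgMor X₂ W)
    (hfun : ∀ w, r₂.toFun (e.toFun w) = r₁.toFun w)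
    (hle : e.le = fun a b => a = b)
    (hinj : Function.Injective e.toFun)
    (hiff : ∀ a b, r₁.toFun a = r₁.toFun b →
      (r₁.le a b ↔ r₂.le (e.toFun a) (e.toFun b))) :
    e.comp r₂ = r₁ := by
  refine AlgMor.ext' (funext fun w => hfun w) ?_
  funext a b
  apply propext
  constructor
  · rintro (⟨hne, h⟩ | ⟨heq, h⟩)
    · have hr : r₁.toFun a = r₁.toFun b := by
        rw [← hfun a, ← hfun b]; exact r₂.le_fib h
      exact (hiff a b hr).2 h
    · rw [hle] at h
      subst h
      exact r₁.le_refl a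
  · intro h
    have hr : r₁.toFun a = r₁.toFun b := r₁.le_fib h
    by_cases hab : a = b
    · subst hab
      exact Or.inr ⟨rfl, by rw [hle]⟩
    · exact Or.inl ⟨fun he => hab (hinj he), (hiff a b hr).1 h⟩

theorem AlgMor.comp_eq_id {A B : Type} (e : AlgMor A B) (f : AlgMor B A)
    (h : ∀ a, f.toFun (e.toFun a) = a)
    (hle : e.le = fun a b => a = b) (hlf : f.le = fun a b => a = b) :
    e.comp f = AlgMor.id A := by
  refine AlgMor.ext' (funext fun a => h a) ?_
  funext a b
  apply propext
  show _ ∨ _ ↔ a = b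
  rw [hle, hlf]
  constructor
  · rintro (⟨hne, hh⟩ | ⟨_, hh⟩)
    · exact absurd hh hne
    · exact hh
  · rintro rfl
    exact Or.inr ⟨rfl, rfl⟩

/-- In `Alg`, every cospan admits a pseudo-pullback, unique up to
unique isomorphism: for morphisms `p : X → Y`, `q : Y' → Y` of finite sets there is a
pseudo-pullback square over `(p, q)`; and for any two pseudo-pullback squares over the
same cospan there is a unique isomorphism between their apexes commuting with the
projections to `X` and to `Y'`. -/
theorem statement7 :
    (∀ (X Y Y' : Type) [Fintype X] [Fintype Y] [Fintype Y']
      (p : AlgMor X Y) (q : AlgMor Y' Y),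
      ∃ (X' : Type) (_ : Fintype X') (p' : AlgMor X' Y') (q' : AlgMor X' X),
        IsPseudoPullback p q p' q') ∧
    (∀ (X Y Y' X₁ X₂ : Type) [Fintype X] [Fintype Y] [Fintype Y'] [Fintype X₁]
      [Fintype X₂] (p : AlgMor X Y) (q : AlgMor Y' Y)
      (p₁ : AlgMor X₁ Y') (q₁ : AlgMor X₁ X) (p₂ : AlgMor X₂ Y') (q₂ : AlgMor X₂ X),
      IsPseudoPullback p q p₁ q₁ → IsPseudoPullback p q p₂ q₂ →
      ∃! e : AlgMor X₁ X₂, e.IsIso ∧ e.comp p₂ = p₁ ∧ e.comp q₂ = q₁) := by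
  classical
  constructor
  · intro X Y Y' _ _ _ p q
    refine ⟨{xy : X × Y' // p.toFun xy.1 = q.toFun xy.2}, Fintype.ofFinite _,
      ⟨fun w => w.1.2, fun w w' => w.1.2 = w'.1.2 ∧ p.le w.1.1 w'.1.1,
        fun h => h.1, fun w => ⟨rfl, p.le_refl _⟩,
        fun h g => ⟨h.1.trans g.1, p.le_trans h.2 g.2⟩,
        fun h g => Subtype.ext (Prod.ext (p.le_antisymm h.2 g.2) h.1),
        ?_⟩,
      ⟨fun w => w.1.1, fun w w' => w.1.1 = w'.1.1 ∧ q.le w.1.2 w'.1.2,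
        fun h => h.1, fun w => ⟨rfl, q.le_refl _⟩,
        fun h g => ⟨h.1.trans g.1, q.le_trans h.2 g.2⟩,
        fun h g => Subtype.ext (Prod.ext h.1 (q.le_antisymm h.2 g.2)),
        ?_⟩, ?_, ?_, ?_, ?_⟩
    · intro w w' h
      have h' : (w : X × Y').2 = (w' : X × Y').2 := h
      have : p.toFun w.1.1 = p.toFun w'.1.1 := by rw [w.2, w'.2, h']
      rcases p.le_total this with h' | h'
      · exact Or.inl ⟨h, h'⟩
      · exact Or.inr ⟨h.symm, h'⟩
    · intro w w' h
      have h' : (w : X × Y').1 = (w' : X × Y').1 := h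
      have : q.toFun w.1.2 = q.toFun w'.1.2 := by rw [← w.2, ← w'.2, h']
      rcases q.le_total this with h' | h'
      · exact Or.inl ⟨h, h'⟩
      · exact Or.inr ⟨h.symm, h'⟩
    · exact fun w => w.2.symm
    · intro x y' h
      exact ⟨⟨(x, y'), h⟩, ⟨rfl, rfl⟩, fun w hw => Subtype.ext (Prod.ext hw.1 hw.2)⟩
    · intro w w' h
      exact ⟨fun hh => hh.2, fun hh => ⟨h, hh⟩⟩
    · intro w w' h
      exact ⟨fun hh => hh.2, fun hh => ⟨h, hh⟩⟩
  · intro X Y Y' X₁ X₂ _ _ _ _ _ p q p₁ q₁ p₂ q₂ h₁ h₂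
    obtain ⟨e, heq, hep, hle⟩ := pb_map h₁ h₂
    obtain ⟨f, hfq, hfp, hlf⟩ := pb_map h₂ h₁
    have hinj : Function.Injective e.toFun := by
      intro a b hab
      exact pb_inj h₁ ((heq a).symm.trans (hab ▸ heq b)) ((hep a).symm.trans (hab ▸ hep b))
    have hfe : ∀ a, f.toFun (e.toFun a) = a := by
      intro a
      exact pb_inj h₁ ((hfq _).trans (heq a)) ((hfp _).trans (hep a))
    have hef : ∀ a, e.toFun (f.toFun a) = a := by
      intro a
      exact pb_inj h₂ ((heq _).trans (hfq a)) ((hep _).trans (hfp a))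
    have hcp : e.comp p₂ = p₁ := by
      refine AlgMor.comp_eq_of e p₁ p₂ hep hle hinj ?_
      intro a b hr
      rw [h₁.fib_right hr, h₂.fib_right (by rw [hep a, hep b, hr]), heq a, heq b]
    have hcq : e.comp q₂ = q₁ := by
      refine AlgMor.comp_eq_of e q₁ q₂ heq hle hinj ?_
      intro a b hr
      rw [h₁.fib_left hr, h₂.fib_left (by rw [heq a, heq b, hr]), hep a, hep b]
    refine ⟨e, ⟨⟨f, AlgMor.comp_eq_id e f hfe hle hlf, AlgMor.comp_eq_id f e hef hlf hle⟩,
      hcp, hcq⟩, ?_⟩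
    rintro e' ⟨⟨f', hf'1, hf'2⟩, hcp', hcq'⟩
    have he'q : ∀ w, q₂.toFun (e'.toFun w) = q₁.toFun w := by
      intro w
      exact congrFun (congrArg AlgMor.toFun hcq') w
    have he'p : ∀ w, p₂.toFun (e'.toFun w) = p₁.toFun w := by
      intro w
      exact congrFun (congrArg AlgMor.toFun hcp') w
    have he'inj : Function.Injective e'.toFun := by
      intro a b hab
      have ha : f'.toFun (e'.toFun a) = a := congrFun (congrArg AlgMor.toFun hf'1) a
      have hb : f'.toFun (e'.toFun b) = b := congrFun (congrArg AlgMor.toFun hf'1) b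
      rw [← ha, ← hb, hab]
    refine AlgMor.ext' (funext fun w => pb_inj h₂ ((he'q w).trans (heq w).symm)
      ((he'p w).trans (hep w).symm)) ?_
    rw [hle]
    funext a b
    apply propext
    exact ⟨fun h => he'inj (e'.le_fib h), fun h => h ▸ e'.le_refl a⟩
end

section
/- Pseudo-pullback squares in Alg need not commute. Explicitly: let m: {y₁, y₂} → {∗} be the morphism of Alg whose unique fibre is ordered y₁ ≤ y₂; let P = {y_{1,1}, y_{1,2}, y_{2,1}, y_{2,2}} with m²: P → {y₁,y₂} given by y_{i,j} ↦ y_i with fibres ordered y_{i,1} ≤ y_{i,2}, and m̄²: P → {y₁,y₂} given by y_{i,j} ↦ y_j with fibres ordered y_{1,i} ≤ y_{2,i}. Then the square with legs m², m̄² and the cospan (m, m) is a pseudo-pullback square in Alg, yet m ∘ m² ≠ m ∘ m̄² in Alg: the two composites carry the distinct linear orderings y_{1,1} ≤ y_{1,2} ≤ y_{2,1} ≤ y_{2,2} and y_{1,1} ≤ y_{2,1} ≤ y_{1,2} ≤ y_{2,2} on their common fibre P. -/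
/-- The morphism `m : {y₁, y₂} → {∗}` of `Alg`, with fibre ordered `y₁ ≤ y₂`
(encoding `{y₁, y₂}` as `Fin 2` and `{∗}` as `Fin 1`). -/
def mor : AlgMor (Fin 2) (Fin 1) where
  toFun _ := 0
  le a b := a ≤ b
  le_fib _ := rfl
  le_refl x := le_refl x
  le_trans h g := le_trans h g
  le_antisymm h g := le_antisymm h g
  le_total _ := le_total _ _

/-- The morphism `m² : P → {y₁,y₂}`, `y_{i,j} ↦ y_i`, with fibres ordered
`y_{i,1} ≤ y_{i,2}` (encoding `P = {y_{i,j}}` as `Fin 2 × Fin 2`, `(i,j) ↦ y_{i+1,j+1}`). -/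
def morSq : AlgMor (Fin 2 × Fin 2) (Fin 2) where
  toFun u := u.1
  le u v := u.1 = v.1 ∧ u.2 ≤ v.2
  le_fib h := h.1
  le_refl u := ⟨rfl, le_refl _⟩
  le_trans h g := ⟨h.1.trans g.1, h.2.trans g.2⟩
  le_antisymm h g := Prod.ext h.1 (le_antisymm h.2 g.2)
  le_total {u v} h := by
    rcases le_total u.2 v.2 with h' | h'
    · exact Or.inl ⟨h, h'⟩
    · exact Or.inr ⟨h.symm, h'⟩

/-- The morphism `m̄² : P → {y₁,y₂}`, `y_{i,j} ↦ y_j`, with fibres ordered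
`y_{1,i} ≤ y_{2,i}`. -/
def morBarSq : AlgMor (Fin 2 × Fin 2) (Fin 2) where
  toFun u := u.2
  le u v := u.2 = v.2 ∧ u.1 ≤ v.1
  le_fib h := h.1
  le_refl u := ⟨rfl, le_refl _⟩
  le_trans h g := ⟨h.1.trans g.1, h.2.trans g.2⟩
  le_antisymm h g := Prod.ext (le_antisymm h.2 g.2) h.1
  le_total {u v} h := by
    rcases le_total u.1 v.1 with h' | h'
    · exact Or.inl ⟨h, h'⟩
    · exact Or.inr ⟨h.symm, h'⟩

/-- Pseudo-pullback squares in `Alg` need not commute: the square with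
legs `m̄², m²` over the cospan `(m, m)` is a pseudo-pullback square, yet
`m ∘ m² ≠ m ∘ m̄²` in `Alg`; the two composites carry, respectively, the lexicographic
ordering `y_{1,1} ≤ y_{1,2} ≤ y_{2,1} ≤ y_{2,2}` and the colexicographic ordering
`y_{1,1} ≤ y_{2,1} ≤ y_{1,2} ≤ y_{2,2}` on their common fibre `P`. -/
theorem statement8 :
    IsPseudoPullback mor mor morBarSq morSq ∧
    morSq.comp mor ≠ morBarSq.comp mor ∧
    (morSq.comp mor).le =
      (fun u v : Fin 2 × Fin 2 => u.1 < v.1 ∨ (u.1 = v.1 ∧ u.2 ≤ v.2)) ∧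
    (morBarSq.comp mor).le =
      (fun u v : Fin 2 × Fin 2 => u.2 < v.2 ∨ (u.2 = v.2 ∧ u.1 ≤ v.1)) := by
  have hle1 : (morSq.comp mor).le =
      (fun u v : Fin 2 × Fin 2 => u.1 < v.1 ∨ (u.1 = v.1 ∧ u.2 ≤ v.2)) := by
    funext u v
    apply propext
    show (morSq.toFun u ≠ morSq.toFun v ∧ mor.le (morSq.toFun u) (morSq.toFun v)) ∨
      (morSq.toFun u = morSq.toFun v ∧ morSq.le u v) ↔ _
    constructor
    · rintro (⟨h1, h2⟩ | ⟨h1, h2⟩)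
      · exact Or.inl (lt_of_le_of_ne h2 h1)
      · exact Or.inr ⟨h1, h2.2⟩
    · rintro (h | ⟨h1, h2⟩)
      · exact Or.inl ⟨ne_of_lt h, le_of_lt h⟩
      · exact Or.inr ⟨h1, h1, h2⟩
  have hle2 : (morBarSq.comp mor).le =
      (fun u v : Fin 2 × Fin 2 => u.2 < v.2 ∨ (u.2 = v.2 ∧ u.1 ≤ v.1)) := by
    funext u v
    apply propext
    show (morBarSq.toFun u ≠ morBarSq.toFun v ∧ mor.le (morBarSq.toFun u) (morBarSq.toFun v)) ∨
      (morBarSq.toFun u = morBarSq.toFun v ∧ morBarSq.le u v) ↔ _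
    constructor
    · rintro (⟨h1, h2⟩ | ⟨h1, h2⟩)
      · exact Or.inl (lt_of_le_of_ne h2 h1)
      · exact Or.inr ⟨h1, h2.2⟩
    · rintro (h | ⟨h1, h2⟩)
      · exact Or.inl ⟨ne_of_lt h, le_of_lt h⟩
      · exact Or.inr ⟨h1, h1, h2⟩
  refine ⟨⟨fun w => rfl, ?_, ?_, ?_⟩, ?_, hle1, hle2⟩
  · intro x y' _
    exact ⟨(x, y'), ⟨rfl, rfl⟩, fun w ⟨h1, h2⟩ => Prod.ext h1 h2⟩
  · intro w w' h
    exact ⟨fun h' => h'.2, fun h' => ⟨h, h'⟩⟩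
  · intro w w' h
    exact ⟨fun h' => h'.2, fun h' => ⟨h, h'⟩⟩
  · intro h
    have h2 := congrArg AlgMor.le h
    rw [hle1, hle2] at h2
    have h3 := congrFun (congrFun h2 ((0 : Fin 2), (1 : Fin 2))) ((1 : Fin 2), (0 : Fin 2))
    simp only [eq_iff_iff] at h3
    revert h3
    decide
end

section
/- Let A be an abelian category and n ≥ 1. The functor W_n(A) → Fun([n-1], A) sending a functor F to the chain F(0,1) → F(0,2) → ⋯ → F(0,n) (indexed by the linear order [n-1] = {0 < ⋯ < n-1}) is fully faithful, and its essential image consists exactly of those functors [n-1] → A all of whose arrows are monomorphisms. -/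
open CategoryTheory CategoryTheory.Limits

/-- The poset `Ar[n]` of pairs `(i,j)` with `0 ≤ i ≤ j ≤ n`, ordered componentwise. -/
abbrev ArPos (n : ℕ) := {p : Fin (n+1) × Fin (n+1) // p.1 ≤ p.2}

/-- The morphism of `Ar[n]` from `(i,j)` to `(i',j')` when `i ≤ i'` and `j ≤ j'`. -/
def arLe {n : ℕ} {i j i' j' : Fin (n+1)} (hij : i ≤ j) (hi'j' : i' ≤ j')
    (h1 : i ≤ i') (h2 : j ≤ j') :
    (⟨(i, j), hij⟩ : ArPos n) ⟶ ⟨(i', j'), hi'j'⟩ :=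
  homOfLE (Subtype.mk_le_mk.mpr (Prod.mk_le_mk.mpr ⟨h1, h2⟩))

/-- The condition defining `W_n(A)` inside `Fun(Ar[n], A)`: each `F(i,i)` is a zero
object, and for every pair `(i,j) ≤ (i',j')` in `Ar[n]` (with all four corners in
`Ar[n]`) the square with vertices `F(i,j), F(i,j'), F(i',j), F(i',j')` is both a
pullback and a pushout. -/
def WCond {A : Type*} [Category A] (n : ℕ) (F : ArPos n ⥤ A) : Prop :=
  (∀ i : Fin (n+1), IsZero (F.obj ⟨(i, i), le_rfl⟩)) ∧
  (∀ (i i' j j' : Fin (n+1)) (h1 : i ≤ i') (h2 : i' ≤ j) (h3 : j ≤ j'),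
    IsPullback
        (F.map (arLe (h1.trans h2) ((h1.trans h2).trans h3) le_rfl h3))
        (F.map (arLe (h1.trans h2) h2 h1 le_rfl))
        (F.map (arLe ((h1.trans h2).trans h3) (h2.trans h3) h1 le_rfl))
        (F.map (arLe h2 (h2.trans h3) le_rfl h3)) ∧
    IsPushout
        (F.map (arLe (h1.trans h2) ((h1.trans h2).trans h3) le_rfl h3))
        (F.map (arLe (h1.trans h2) h2 h1 le_rfl))
        (F.map (arLe ((h1.trans h2).trans h3) (h2.trans h3) h1 le_rfl))
        (F.map (arLe h2 (h2.trans h3) le_rfl h3)))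

/-- The category `W_n(A)` of diagrams arising in level `n` of Waldhausen's
`S`-construction of `A`. -/
abbrev W (A : Type*) [Category A] (n : ℕ) := ObjectProperty.FullSubcategory (WCond (A := A) n)

/-- The monotone inclusion `[n-1] → Ar[n]`, `t ↦ (0, t+1)`. -/
def topMono (n : ℕ) : Fin n →o ArPos n where
  toFun t := ⟨((0 : Fin (n+1)), ⟨t.val + 1, by omega⟩), Fin.zero_le _⟩
  monotone' s t h :=
    Subtype.mk_le_mk.mpr (Prod.mk_le_mk.mpr ⟨le_rfl, Fin.mk_le_mk.mpr (by
      exact Nat.succ_le_succ h)⟩)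

/-- The functor `W_n(A) → Fun([n-1], A)` sending `F` to the chain
`F(0,1) → F(0,2) → ⋯ → F(0,n)`. -/
def topRow (A : Type*) [Category A] (n : ℕ) : W A n ⥤ (Fin n ⥤ A) :=
  ObjectProperty.ι _ ⋙
    (Functor.whiskeringLeft (Fin n) (ArPos n) A).obj (topMono n).monotone.functor

/-!
In an object `F` of `W_n(A)`, the pushout square with corners `F(0,i), F(0,j), F(i,i) = 0, F(i,j)`
exhibits `F(i,j)` as the cokernel of `F(0,i) ⟶ F(0,j)`, so `F` and its morphisms are recovered from
the row `F(0,-)`, and dropping its entry `F(0,0) = 0` loses nothing. The pullback square with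
corners `F(0,j), F(0,j'), F(j,j) = 0, F(j,j')` makes `F(0,j) ⟶ F(0,j')` mono. Conversely, a chain
of monomorphisms `E`, prefixed by `E 0 = 0`, yields the diagram `(i,j) ↦ E j / E i`: its squares
are pushouts by pasting two cokernel squares, and they are pullbacks because in an abelian
category a pushout square along a monomorphism is a pullback.
-/

namespace CategoryTheory

lemma Abelian.isPullback_of_isPushout_of_mono_left {C : Type*} [Category C] [Abelian C]
    {X₁ X₂ X₃ X₄ : C} {t : X₁ ⟶ X₂} {l : X₁ ⟶ X₃} {r : X₂ ⟶ X₄} {b : X₃ ⟶ X₄}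
    (h : IsPushout t l r b) [Mono t] : IsPullback t l r b := by
  -- `X₁ ⟶ X₂ ⊞ X₃ ⟶ X₄` is exact and its first map is mono, so `X₁` is the kernel of the second.
  have : Mono (biprod.lift t (-l)) := mono_of_mono_fac (biprod.lift_fst t (-l))
  have : Mono h.shortComplex.f := this
  have lift (s : PullbackCone r b) :
      ∃ u : s.pt ⟶ X₁, u ≫ biprod.lift t (-l) = biprod.lift s.fst (-s.snd) :=
    h.exact_shortComplex.lift' _ (show _ ≫ biprod.desc r b = 0 by simp [s.condition])
  choose u hu using lift
  exact IsPullback.of_isLimit' h.toCommSq (PullbackCone.IsLimit.mk h.w u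
    (fun s ↦ by simpa using hu s =≫ biprod.fst) (fun s ↦ by simpa using hu s =≫ biprod.snd)
    (fun s m hm _ ↦ by rw [← cancel_mono t, hm]; simpa using (hu s =≫ biprod.fst).symm))

lemma Limits.isPushout_cokernel_desc {C : Type*} [Category C] [HasZeroMorphisms C] {X Y Z : C}
    (f : X ⟶ Y) (g : Y ⟶ Z) (h : X ⟶ Z) (w : f ≫ g = h) [HasCokernel f] [HasCokernel h] :
    IsPushout g (cokernel.π f) (cokernel.π h)
      (cokernel.desc f (g ≫ cokernel.π h) (by rw [← Category.assoc, w, cokernel.condition])) := by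
  subst w
  refine IsPushout.of_isColimit' ⟨by simp⟩ (PushoutCocone.IsColimit.mk _
    (fun s ↦ cokernel.desc _ s.inl (by rw [Category.assoc, s.condition, cokernel.condition_assoc,
      zero_comp]))
    (fun s ↦ cokernel.π_desc _ _ _) (fun s ↦ ?_) (fun s m hm _ ↦ ?_))
  · rw [← cancel_epi (cokernel.π f)]
    simp [s.condition]
  · rw [← cancel_epi (cokernel.π (f ≫ g))]
    simpa using hm

section Preorder

variable {J C : Type*} [Preorder J] [Category C] (F : J ⥤ C)

lemma Functor.map_comp_map_eq {a b b' c : J} (f : a ⟶ b) (g : b ⟶ c) (f' : a ⟶ b')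
    (g' : b' ⟶ c) : F.map f ≫ F.map g = F.map f' ≫ F.map g' := by
  rw [← F.map_comp, ← F.map_comp, Subsingleton.elim (f ≫ g) (f' ≫ g')]

lemma Functor.map_eq_id {a : J} (f : a ⟶ a) : F.map f = 𝟙 _ := by
  rw [Subsingleton.elim f (𝟙 a), F.map_id]

end Preorder

namespace ComposableArrows

variable {C : Type*} [Category C] {m : ℕ}

lemma δ₀Functor_map_injective_of_isZero {F G : ComposableArrows C (m + 1)}
    (hF : IsZero (F.obj 0)) : Function.Injective (δ₀Functor.map : (F ⟶ G) → (F.δ₀ ⟶ G.δ₀)) :=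
  fun _ _ h ↦ hom_ext_succ (hF.eq_of_src _ _) h

lemma δ₀Functor_map_surjective_of_isZero {F G : ComposableArrows C (m + 1)}
    (hF : IsZero (F.obj 0)) : Function.Surjective (δ₀Functor.map : (F ⟶ G) → (F.δ₀ ⟶ G.δ₀)) :=
  fun β ↦ ⟨homMkSucc (hF.to_ _) β (hF.eq_of_src _ _), rfl⟩

lemma mono_precomp_map {D : ComposableArrows C m}
    (hD : ∀ {i j : Fin (m + 1)} (g : i ⟶ j), Mono (D.map g)) {X : C} (hX : IsZero X)
    (f : X ⟶ D.left) {i j : Fin (m + 2)} (g : i ⟶ j) : Mono ((D.precomp f).map g) := by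
  induction i using Fin.cases with
  | zero => exact hX.mono _
  | succ i =>
    induction j using Fin.cases with
    | zero => exact absurd (leOfHom g) (by simp)
    | succ j => exact hD (homOfLE (Fin.succ_le_succ_iff.mp (leOfHom g)))

end ComposableArrows

end CategoryTheory

section ZeroRow

variable {A : Type*} [Category A] {n : ℕ}

def zeroRow (n : ℕ) : Fin (n + 1) ⥤ ArPos n :=
  Monotone.functor (f := fun j ↦ ⟨(0, j), Fin.zero_le j⟩)
    fun _ _ h ↦ Subtype.mk_le_mk.mpr (Prod.mk_le_mk.mpr ⟨le_rfl, h⟩)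

def zeroRowFunctor (A : Type*) [Category A] (n : ℕ) : W A n ⥤ ComposableArrows A n :=
  ObjectProperty.ι _ ⋙ (Functor.whiskeringLeft _ _ A).obj (zeroRow n)

lemma topRow_eq_zeroRowFunctor_comp (A : Type*) [Category A] (m : ℕ) :
    topRow A (m + 1) = zeroRowFunctor A (m + 1) ⋙ ComposableArrows.δ₀Functor :=
  rfl

namespace W

variable (F : W A n)

def fromZeroRow (p : ArPos n) : ((zeroRowFunctor A n).obj F).obj p.1.2 ⟶ F.obj.obj p :=
  F.obj.map (homOfLE (Subtype.mk_le_mk.mpr (Prod.mk_le_mk.mpr ⟨Fin.zero_le _, le_rfl⟩)))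

lemma fromZeroRow_zeroRow (j : Fin (n + 1)) : F.fromZeroRow ((zeroRow n).obj j) = 𝟙 _ :=
  F.obj.map_id _

lemma fromZeroRow_naturality {G : W A n} (φ : F ⟶ G) (p : ArPos n) :
    F.fromZeroRow p ≫ φ.hom.app p = ((zeroRowFunctor A n).map φ).app p.1.2 ≫ G.fromZeroRow p :=
  φ.hom.naturality _

lemma fromZeroRow_comp_map {p q : ArPos n} (f : p ⟶ q) :
    F.fromZeroRow p ≫ F.obj.map f =
      ((zeroRowFunctor A n).obj F).map (homOfLE (leOfHom f).2) ≫ F.fromZeroRow q :=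
  F.obj.map_comp_map_eq _ _ _ _

lemma isZero_zeroRowFunctor_obj_zero : IsZero (((zeroRowFunctor A n).obj F).obj 0) :=
  F.2.1 0

lemma epi_fromZeroRow (p : ArPos n) : Epi (F.fromZeroRow p) :=
  (F.2.2 0 p.1.1 p.1.1 p.1.2 (Fin.zero_le _) le_rfl p.2).2.epi_inl_of_epi ((F.2.1 _).epi _)

lemma mono_map_of_fst_eq {i j j' : Fin (n + 1)} (hij : i ≤ j) (hjj' : j ≤ j') :
    Mono (F.obj.map (arLe hij (hij.trans hjj') le_rfl hjj')) :=
  (F.2.2 i j j j' hij le_rfl hjj').1.mono_fst_of_mono ((F.2.1 j).mono _)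

lemma mono_topRow_map {s t : Fin n} (f : s ⟶ t) : Mono (((topRow A n).obj F).map f) :=
  F.mono_map_of_fst_eq (Fin.zero_le _) (Fin.succ_le_succ_iff.mpr (leOfHom f))

variable [HasZeroMorphisms A]

lemma map_comp_fromZeroRow (p : ArPos n) :
    ((zeroRowFunctor A n).obj F).map (homOfLE p.2) ≫ F.fromZeroRow p = 0 := by
  obtain ⟨⟨i, j⟩, hij⟩ := p
  refine (F.obj.map_comp_map_eq _ _ (arLe (Fin.zero_le _) le_rfl (Fin.zero_le _) le_rfl)
    (arLe le_rfl hij le_rfl hij)).trans ?_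
  rw [(F.2.1 i).eq_of_tgt (F.obj.map _) 0]
  exact zero_comp

lemma exists_desc_fromZeroRow (p : ArPos n) {X : A}
    (k : ((zeroRowFunctor A n).obj F).obj p.1.2 ⟶ X)
    (hk : ((zeroRowFunctor A n).obj F).map (homOfLE p.2) ≫ k = 0) :
    ∃ d : F.obj.obj p ⟶ X, F.fromZeroRow p ≫ d = k :=
  have sq := (F.2.2 0 p.1.1 p.1.1 p.1.2 (Fin.zero_le _) le_rfl p.2).2
  ⟨sq.desc k 0 (by rw [comp_zero]; exact hk), sq.inl_desc _ _ _⟩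

end W

instance : (zeroRowFunctor A n).Faithful where
  map_injective {F G} φ ψ h := by
    ext p
    have := F.epi_fromZeroRow p
    rw [← cancel_epi (F.fromZeroRow p), F.fromZeroRow_naturality, F.fromZeroRow_naturality, h]

instance [HasZeroMorphisms A] : (zeroRowFunctor A n).Full where
  map_surjective {F G} α := by
    choose β hβ using fun p ↦ F.exists_desc_fromZeroRow p (α.app p.1.2 ≫ G.fromZeroRow p)
      (by rw [← Category.assoc, α.naturality, Category.assoc, G.map_comp_fromZeroRow, comp_zero])
    refine ⟨ObjectProperty.homMk ⟨β, fun p q f ↦ ?_⟩, ?_⟩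
    · have := F.epi_fromZeroRow p
      rw [← cancel_epi (F.fromZeroRow p), reassoc_of% (hβ p), G.fromZeroRow_comp_map,
        ← Category.assoc, F.fromZeroRow_comp_map, Category.assoc, hβ q, ← α.naturality_assoc]
    · ext j
      have h := hβ ((zeroRow n).obj j)
      rw [F.fromZeroRow_zeroRow, G.fromZeroRow_zeroRow] at h
      exact (Category.id_comp _).symm.trans (h.trans (Category.comp_id _))

end ZeroRow

section TopRow

variable {A : Type*} [Category A] {m : ℕ}

instance [HasZeroMorphisms A] : (topRow A (m + 1)).Full := by
  rw [topRow_eq_zeroRowFunctor_comp]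
  refine ⟨fun {F G} α ↦ ?_⟩
  obtain ⟨β, rfl⟩ :=
    ComposableArrows.δ₀Functor_map_surjective_of_isZero F.isZero_zeroRowFunctor_obj_zero α
  obtain ⟨φ, rfl⟩ := (zeroRowFunctor A (m + 1)).map_surjective β
  exact ⟨φ, rfl⟩

instance : (topRow A (m + 1)).Faithful := by
  rw [topRow_eq_zeroRowFunctor_comp]
  exact ⟨fun {F _} _ _ h ↦ (zeroRowFunctor A (m + 1)).map_injective
    (ComposableArrows.δ₀Functor_map_injective_of_isZero F.isZero_zeroRowFunctor_obj_zero h)⟩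

lemma mono_map_of_mem_essImage_topRow {n : ℕ} {D : Fin n ⥤ A} (hD : (topRow A n).essImage D)
    {s t : Fin n} (f : s ⟶ t) : Mono (D.map f) := by
  obtain ⟨F, ⟨e⟩⟩ := hD
  have := F.mono_topRow_map f
  rw [← NatIso.naturality_1 e f]
  infer_instance

end TopRow

section CokernelDiagram

variable {A : Type*} [Category A] [Abelian A] {n : ℕ}

def arPosToArrow (n : ℕ) : ArPos n ⥤ Arrow (Fin (n + 1)) where
  obj p := Arrow.mk (homOfLE p.2)
  map f := Arrow.homMk (homOfLE (leOfHom f).1) (homOfLE (leOfHom f).2) (Subsingleton.elim _ _)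

noncomputable def cokernelDiagram (E : ComposableArrows A n) : ArPos n ⥤ A :=
  arPosToArrow n ⋙ E.mapArrow ⋙ coker A

variable (E : ComposableArrows A n)

-- `cokernel.π`, typed with the diagram's object as target so that it rewrites against its maps.
noncomputable def cokernelDiagramπ (p : ArPos n) : E.obj p.1.2 ⟶ (cokernelDiagram E).obj p :=
  cokernel.π _

lemma cokernelDiagramπ_comp_map {p q : ArPos n} (f : p ⟶ q) :
    cokernelDiagramπ E p ≫ (cokernelDiagram E).map f =
      E.map (homOfLE (leOfHom f).2) ≫ cokernelDiagramπ E q :=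
  cokernel.π_desc _ _ _

lemma isZero_cokernelDiagram_obj_diag (i : Fin (n + 1)) :
    IsZero ((cokernelDiagram E).obj ⟨(i, i), le_rfl⟩) := by
  have : Epi (E.map (homOfLE (le_refl i))) := by rw [E.map_eq_id]; infer_instance
  exact isZero_cokernel_of_epi (E.map (homOfLE (le_refl i)))

lemma isPushout_cokernelDiagram {i j j' : Fin (n + 1)} (hij : i ≤ j) (hjj' : j ≤ j') :
    IsPushout (E.map (homOfLE hjj')) (cokernelDiagramπ E ⟨(i, j), hij⟩)
      (cokernelDiagramπ E ⟨(i, j'), hij.trans hjj'⟩)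
      ((cokernelDiagram E).map (arLe hij (hij.trans hjj') le_rfl hjj')) :=
  isPushout_cokernel_desc _ _ _ (E.map_comp (homOfLE hij) (homOfLE hjj')).symm

variable {E}

lemma mono_cokernelDiagram_map_of_fst_eq (hE : ∀ {j j' : Fin (n + 1)} (g : j ⟶ j'), Mono (E.map g))
    {i j j' : Fin (n + 1)} (hij : i ≤ j) (hjj' : j ≤ j') :
    Mono ((cokernelDiagram E).map (arLe hij (hij.trans hjj') le_rfl hjj')) :=
  MorphismProperty.of_isPushout (P := .monomorphisms A)
    (isPushout_cokernelDiagram E hij hjj').flip (hE _)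

lemma wCond_cokernelDiagram (hE : ∀ {j j' : Fin (n + 1)} (g : j ⟶ j'), Mono (E.map g)) :
    WCond n (cokernelDiagram E) := by
  refine ⟨isZero_cokernelDiagram_obj_diag E, fun i i' j j' h1 h2 h3 ↦ ?_⟩
  have := mono_cokernelDiagram_map_of_fst_eq hE (h1.trans h2) h3
  refine (fun po ↦ ⟨Abelian.isPullback_of_isPushout_of_mono_left po, po⟩) ?_
  refine IsPushout.of_top ?_ ((cokernelDiagram E).map_comp_map_eq _ _ _ _)
    (isPushout_cokernelDiagram E (h1.trans h2) h3)
  rw [cokernelDiagramπ_comp_map, cokernelDiagramπ_comp_map, E.map_eq_id, E.map_eq_id,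
    Category.id_comp, Category.id_comp]
  exact isPushout_cokernelDiagram E h2 h3

noncomputable def topRowObjCokernelDiagramIso (hE : IsZero (E.obj 0))
    (hW : WCond n (cokernelDiagram E)) :
    (topRow A n).obj ⟨cokernelDiagram E, hW⟩ ≅ Fin.succFunctor n ⋙ E :=
  (NatIso.ofComponents
    (fun t ↦ @asIso _ _ _ _ (cokernelDiagramπ E ((topMono n) t))
      (cokernel.π_of_zero (hE.eq_of_src _ _)))
    fun f ↦ (cokernelDiagramπ_comp_map E ((topMono n).monotone.functor.map f)).symm).symm

open ZeroObject in
lemma mem_essImage_topRow_of_mono {m : ℕ} (D : Fin (m + 1) ⥤ A)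
    (hD : ∀ {s t : Fin (m + 1)} (f : s ⟶ t), Mono (D.map f)) :
    (topRow A (m + 1)).essImage D :=
  let E := ComposableArrows.precomp D (0 : 0 ⟶ D.obj 0)
  have hW := wCond_cokernelDiagram (ComposableArrows.mono_precomp_map hD (isZero_zero A) _)
  ⟨⟨cokernelDiagram E, hW⟩, ⟨topRowObjCokernelDiagramIso (isZero_zero A) hW⟩⟩

end CokernelDiagram

/-- For an abelian category `A` and `n ≥ 1`, the functor
`W_n(A) → Fun([n-1], A)`, `F ↦ (F(0,1) → ⋯ → F(0,n))`, is fully faithful with essential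
image the functors `[n-1] → A` all of whose arrows are monomorphisms. -/
theorem statement9 (A : Type*) [Category A] [Abelian A] (n : ℕ) (hn : 1 ≤ n) :
    (topRow A n).Full ∧ (topRow A n).Faithful ∧
    (∀ D : Fin n ⥤ A,
      (topRow A n).essImage D ↔ ∀ (s t : Fin n) (f : s ⟶ t), Mono (D.map f)) := by
  obtain ⟨m, rfl⟩ : ∃ m, n = m + 1 := ⟨n - 1, by omega⟩
  exact ⟨inferInstance, inferInstance, fun D ↦ ⟨fun hD _ _ ↦ mono_map_of_mem_essImage_topRow hD,
    fun hD ↦ mem_essImage_topRow_of_mono D (hD _ _)⟩⟩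
end

section
/- Let A be an abelian category, n ≥ 1, and 0 ≤ i < n. Let σ_i: [n] → [n-1] be the monotone surjection with σ_i(i) = σ_i(i+1), and let Ar(σ_i): Ar[n] → Ar[n-1] be the induced map of posets, (j,j') ↦ (σ_i(j), σ_i(j')). Then precomposition with Ar(σ_i) defines a functor W_{n-1}(A) → W_n(A) which is fully faithful, and whose essential image consists exactly of those F ∈ W_n(A) for which F(i,i+1) is a zero object. -/
open CategoryTheory CategoryTheory.Limits

/-- The map `Ar(σ_i) : Ar[n] → Ar[n-1]` (with `n = m+1`) induced by the monotone
surjection `σ_i : [m+1] → [m]` identifying `i` and `i+1`, given by `Fin.predAbove i`. -/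
def arSigma (m : ℕ) (i : Fin (m+1)) (p : ArPos (m+1)) : ArPos m :=
  ⟨(i.predAbove p.val.1, i.predAbove p.val.2),
    Fin.predAbove_right_monotone i p.property⟩

lemma arSigma_monotone (m : ℕ) (i : Fin (m+1)) : Monotone (arSigma m i) :=
  fun p q h => Subtype.mk_le_mk.mpr
    (Prod.mk_le_mk.mpr
      ⟨Fin.predAbove_right_monotone i (Prod.le_def.mp (Subtype.coe_le_coe.mpr h)).1,
       Fin.predAbove_right_monotone i (Prod.le_def.mp (Subtype.coe_le_coe.mpr h)).2⟩)

/-- The functor `Ar[n] ⥤ Ar[n-1]` induced by `σ_i`. -/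
def arSigmaFunctor (m : ℕ) (i : Fin (m+1)) : ArPos (m+1) ⥤ ArPos m :=
  (arSigma_monotone m i).functor

/-! `σ_i = Fin.predAbove i` is left adjoint to the coface map `δ = (castSucc i).succAbove`, which
skips `i`, and `σ_i ∘ δ = id`. These induce adjoint monotone maps `Ar(σ_i) ⊣ Ar(δ)`, so
precomposition with `Ar(σ_i)` is right adjoint to precomposition with `Ar(δ)`, with invertible
counit: it is fully faithful, and `F` lies in its essential image as soon as the unit
`F ⟶ F ∘ Ar(δ σ_i)` is invertible. Its component at `(a,b)` only moves a coordinate equal to `i`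
to `i+1`; when `F(i,i+1) = 0`, the bicartesian squares of `W_n` with this corner and a diagonal
corner show that such moves are inverted by `F`. Conversely `F(i,i+1) = X(σ_i(i,i+1)) = X(i,i) = 0`
for `F = X ∘ Ar(σ_i)`.
-/

theorem Fin.succAbove_predAbove_eq_or {n : ℕ} (p : Fin n) (a : Fin (n + 1)) :
    p.castSucc.succAbove (p.predAbove a) = a ∨
      (a = p.castSucc ∧ p.castSucc.succAbove (p.predAbove a) = p.succ) := by
  by_cases h : a = p.castSucc
  · subst h
    exact Or.inr ⟨rfl, by rw [Fin.predAbove_castSucc_self, Fin.succAbove_castSucc_self]⟩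
  · exact Or.inl (Fin.succAbove_predAbove h)

theorem Fin.le_succAbove_predAbove {n : ℕ} (p : Fin n) (a : Fin (n + 1)) :
    a ≤ p.castSucc.succAbove (p.predAbove a) := by
  rcases Fin.succAbove_predAbove_eq_or p a with h | ⟨rfl, h⟩
  · exact h.ge
  · exact h ▸ Fin.castSucc_le_succ p

theorem Fin.gc_predAbove_succAbove {n : ℕ} (p : Fin n) :
    GaloisConnection p.predAbove p.castSucc.succAbove :=
  GaloisConnection.monotone_intro (Fin.strictMono_succAbove _).monotone
    (Fin.predAbove_right_monotone p) (Fin.le_succAbove_predAbove p)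
    (fun a => (Fin.predAbove_succAbove p a).le)

def arMapObj {n k : ℕ} {f : Fin (n+1) → Fin (k+1)} (hf : Monotone f) (p : ArPos n) : ArPos k :=
  ⟨(f p.1.1, f p.1.2), hf p.2⟩

theorem arMapObj_monotone {n k : ℕ} {f : Fin (n+1) → Fin (k+1)} (hf : Monotone f) :
    Monotone (arMapObj hf) :=
  fun _ _ h => Prod.mk_le_mk.mpr ⟨hf (Prod.le_def.mp h).1, hf (Prod.le_def.mp h).2⟩

def arMap {n k : ℕ} {f : Fin (n+1) → Fin (k+1)} (hf : Monotone f) : ArPos n ⥤ ArPos k :=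
  (arMapObj_monotone hf).functor

theorem GaloisConnection.arMapObj {n k : ℕ} {f : Fin (n+1) → Fin (k+1)}
    {g : Fin (k+1) → Fin (n+1)} (gc : GaloisConnection f g) :
    GaloisConnection (_root_.arMapObj gc.monotone_l) (_root_.arMapObj gc.monotone_u) :=
  fun _ _ => and_congr (gc _ _) (gc _ _)

def arSigmaAdjunction (m : ℕ) (i : Fin (m+1)) :
    arSigmaFunctor m i ⊣ arMap (Fin.strictMono_succAbove i.castSucc).monotone :=
  (Fin.gc_predAbove_succAbove i).arMapObj.adjunction

section WCond

variable {A : Type*} [Category A]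

theorem WCond.comp_arMap {n k : ℕ} {f : Fin (n+1) → Fin (k+1)} (hf : Monotone f)
    {F : ArPos k ⥤ A} (hF : WCond k F) : WCond n (arMap hf ⋙ F) :=
  ⟨fun j => hF.1 (f j), fun _ _ _ _ h₁ h₂ h₃ => hF.2 _ _ _ _ (hf h₁) (hf h₂) (hf h₃)⟩

variable {n : ℕ} {F : ArPos n ⥤ A}

theorem WCond.isIso_map_of_isZero_left (hF : WCond n F) {a a' b : Fin (n+1)} (ha : a ≤ a')
    (hb : a' ≤ b) (hz : IsZero (F.obj ⟨(a, a'), ha⟩)) :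
    IsIso (F.map (arLe (ha.trans hb) hb ha le_rfl)) :=
  (hF.2 a a' a' b ha le_rfl hb).2.isIso_inl_of_isIso (hz.isIso (hF.1 a') _)

theorem WCond.isIso_map_of_isZero_right (hF : WCond n F) {a b b' : Fin (n+1)} (ha : a ≤ b)
    (hb : b ≤ b') (hz : IsZero (F.obj ⟨(b, b'), hb⟩)) :
    IsIso (F.map (arLe ha (ha.trans hb) le_rfl hb)) :=
  (hF.2 a b b b' ha le_rfl hb).1.isIso_fst_of_isIso ((hF.1 b).isIso hz _)

theorem WCond.isIso_map_homOfLE (hF : WCond n F) {x y : Fin (n+1)} (hxy : x ≤ y)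
    (hz : IsZero (F.obj ⟨(x, y), hxy⟩)) {p q : ArPos n} (hpq : p ≤ q)
    (h₁ : q.1.1 = p.1.1 ∨ p.1.1 = x ∧ q.1.1 = y) (h₂ : q.1.2 = p.1.2 ∨ p.1.2 = x ∧ q.1.2 = y) :
    IsIso (F.map (homOfLE hpq)) := by
  obtain ⟨⟨a, b⟩, hab⟩ := p
  obtain ⟨⟨a', b'⟩, hab'⟩ := q
  have ha : a ≤ a' := hpq.1
  have hb : b ≤ b' := hpq.2
  have hsnd : IsIso (F.map (arLe hab (hab.trans hb) le_rfl hb)) := by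
    rcases h₂ with rfl | ⟨rfl, rfl⟩
    · rw [Subsingleton.elim (arLe _ _ _ _) (𝟙 _), F.map_id]
      infer_instance
    · exact hF.isIso_map_of_isZero_right hab hxy hz
  have hfst : IsIso (F.map (arLe (hab.trans hb) hab' ha le_rfl)) := by
    rcases h₁ with rfl | ⟨rfl, rfl⟩
    · rw [Subsingleton.elim (arLe _ _ _ _) (𝟙 _), F.map_id]
      infer_instance
    · exact hF.isIso_map_of_isZero_left hxy hab' hz
  rw [show homOfLE hpq = arLe hab (hab.trans hb) le_rfl hb ≫ arLe (hab.trans hb) hab' ha le_rfl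
    from Subsingleton.elim _ _, F.map_comp]
  infer_instance

end WCond

section Precomposition

variable (A : Type*) [Category A] (m : ℕ) (i : Fin (m+1))

def precompArSigmaAdjunction :
    (Functor.whiskeringLeft _ _ A).obj (arMap (Fin.strictMono_succAbove i.castSucc).monotone) ⊣
      (Functor.whiskeringLeft _ _ A).obj (arSigmaFunctor m i) :=
  Adjunction.whiskerLeft A (arSigmaAdjunction m i)

instance : IsIso (precompArSigmaAdjunction A m i).counit := by
  rw [NatTrans.isIso_iff_isIso_app]
  intro X
  rw [NatTrans.isIso_iff_isIso_app]
  intro r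
  simp only [precompArSigmaAdjunction, Adjunction.whiskerLeft_counit_app_app]
  have : IsIso ((arSigmaAdjunction m i).counit.app r) := by
    rw [PartialOrder.isIso_iff_eq]
    exact Subtype.ext (Prod.ext (Fin.predAbove_succAbove i _) (Fin.predAbove_succAbove i _))
  infer_instance

noncomputable def precompArSigmaFullyFaithful :
    ((Functor.whiskeringLeft _ _ A).obj (arSigmaFunctor m i)).FullyFaithful :=
  (precompArSigmaAdjunction A m i).fullyFaithfulROfIsIsoCounit

variable {A m i}

theorem WCond.isIso_precompArSigmaAdjunction_unit_app {F : ArPos (m+1) ⥤ A} (hF : WCond (m+1) F)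
    (hz : IsZero (F.obj ⟨(i.castSucc, i.succ), (Fin.castSucc_lt_succ (i := i)).le⟩)) :
    IsIso ((precompArSigmaAdjunction A m i).unit.app F) := by
  rw [NatTrans.isIso_iff_isIso_app]
  intro p
  simp only [precompArSigmaAdjunction, Adjunction.whiskerLeft_unit_app_app]
  rw [Subsingleton.elim ((arSigmaAdjunction m i).unit.app p)
    (homOfLE ((Fin.gc_predAbove_succAbove i).arMapObj.le_u_l p))]
  exact hF.isIso_map_homOfLE _ hz _ (Fin.succAbove_predAbove_eq_or i _)
    (Fin.succAbove_predAbove_eq_or i _)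

end Precomposition

section WFunctor

variable (A : Type*) [Category A] (m : ℕ) (i : Fin (m+1))

def precompArSigmaW : W A m ⥤ W A (m+1) :=
  ObjectProperty.lift _
    (ObjectProperty.ι _ ⋙ (Functor.whiskeringLeft _ _ A).obj (arSigmaFunctor m i))
    (fun X => X.property.comp_arMap (Fin.predAbove_right_monotone i))

noncomputable def precompArSigmaWFullyFaithful : (precompArSigmaW A m i).FullyFaithful :=
  .ofCompFaithful (G := ObjectProperty.ι _)
    ((ObjectProperty.fullyFaithfulι _).comp (precompArSigmaFullyFaithful A m i))

variable {A m i}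

theorem precompArSigmaW_essImage_iff (F : W A (m+1)) :
    (precompArSigmaW A m i).essImage F ↔
      IsZero (F.obj.obj ⟨(i.castSucc, i.succ), (Fin.castSucc_lt_succ (i := i)).le⟩) := by
  constructor
  · rintro ⟨X, ⟨e⟩⟩
    have hσ : (arSigmaFunctor m i).obj ⟨(i.castSucc, i.succ), (Fin.castSucc_lt_succ (i := i)).le⟩
        = ⟨(i, i), le_rfl⟩ :=
      Subtype.ext (Prod.ext (Fin.predAbove_castSucc_self i) (Fin.predAbove_succ_self i))
    refine IsZero.of_iso ?_ ((ObjectProperty.ι _).mapIso e |>.app _).symm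
    change IsZero (X.obj.obj ((arSigmaFunctor m i).obj _))
    rw [hσ]
    exact X.property.1 i
  · intro hz
    have := F.property.isIso_precompArSigmaAdjunction_unit_app hz
    let e := asIso ((precompArSigmaAdjunction A m i).unit.app F.obj)
    exact ⟨⟨_, F.property.comp_arMap _⟩, ⟨(ObjectProperty.ι _).preimageIso e.symm⟩⟩

end WFunctor

theorem statement11_general (A : Type*) [Category A] (m : ℕ) (i : Fin (m+1)) :
    ∃ G : W A m ⥤ W A (m+1),
      G ⋙ ObjectProperty.ι _ =
        ObjectProperty.ι _ ⋙
          (Functor.whiskeringLeft (ArPos (m+1)) (ArPos m) A).obj (arSigmaFunctor m i) ∧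
      G.Full ∧ G.Faithful ∧
      (∀ F : W A (m+1),
        G.essImage F ↔
          IsZero (F.obj.obj ⟨(i.castSucc, i.succ), (Fin.castSucc_lt_succ (i := i)).le⟩)) :=
  ⟨precompArSigmaW A m i, rfl, (precompArSigmaWFullyFaithful A m i).full,
    (precompArSigmaWFullyFaithful A m i).faithful, precompArSigmaW_essImage_iff⟩

/-- Let `A` be abelian, `n = m+1 ≥ 1` and `0 ≤ i < n` (i.e.
`i : Fin (m+1)`). Precomposition with `Ar(σ_i)` defines a functor
`W_{n-1}(A) → W_n(A)`; it is fully faithful, and its essential image consists exactly of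
those `F ∈ W_n(A)` for which `F(i,i+1)` is a zero object. -/
theorem statement11 (A : Type*) [Category A] [Abelian A] (m : ℕ) (i : Fin (m+1)) :
    ∃ G : W A m ⥤ W A (m+1),
      G ⋙ ObjectProperty.ι _ =
        ObjectProperty.ι _ ⋙
          (Functor.whiskeringLeft (ArPos (m+1)) (ArPos m) A).obj (arSigmaFunctor m i) ∧
      G.Full ∧ G.Faithful ∧
      (∀ F : W A (m+1),
        G.essImage F ↔
          IsZero (F.obj.obj ⟨(i.castSucc, i.succ), (Fin.castSucc_lt_succ (i := i)).le⟩)) :=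
  statement11_general A m i
end

section
/- For each n ≥ 0 let Pyrnc(n) be the free category on the directed graph G^n whose vertices are the intervals [a;b] (0 ≤ a ≤ b ≤ n) of [n], with an edge [a;b] → [a+1;b] whenever a < b and an edge [a;b] → [a;b-1] whenever a < b. For a monotone map φ: [n] → [m], let Pyrnc(φ): Pyrnc(n) → Pyrnc(m) be the functor given on vertices by [a;b] ↦ [φ(a);φ(b)], sending the generating edge [a;b] → [a+1;b] to the path [φ(a);φ(b)] → [φ(a)+1;φ(b)] → ⋯ → [φ(a+1);φ(b)] of successive left-endpoint increments, and the generating edge [a;b] → [a;b-1] to the path [φ(a);φ(b)] → [φ(a);φ(b)-1] → ⋯ → [φ(a);φ(b-1)] of successive right-endpoint decrements. Then these assignments are functorial: Pyrnc(id_{[n]}) is the identity functor, and Pyrnc(ψ ∘ φ) = Pyrnc(ψ) ∘ Pyrnc(φ) for composable monotone maps; hence [n] ↦ Pyrnc(n) defines a functor from the simplex category Δ to the category of small categories. -/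
open CategoryTheory

/-- The vertices of the graph `G^n`: the intervals `[a;b]` with `0 ≤ a ≤ b ≤ n`. -/
def PVert (n : ℕ) : Type := {p : ℕ × ℕ // p.1 ≤ p.2 ∧ p.2 ≤ n}

/-- The edges of the reflexive directed graph `G^n`: `[a;b] → [a+1;b]` and
`[a;b] → [a;b-1]`, whenever `a < b`. -/
inductive PEdge (n : ℕ) : PVert n → PVert n → Type
  | left (v w : PVert n) (h : v.val.1 < v.val.2) (h1 : w.val.1 = v.val.1 + 1)
      (h2 : w.val.2 = v.val.2) : PEdge n v w
  | right (v w : PVert n) (h : v.val.1 < v.val.2) (h1 : w.val.1 = v.val.1)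
      (h2 : w.val.2 = v.val.2 - 1) : PEdge n v w

instance (n : ℕ) : Quiver (PVert n) := ⟨PEdge n⟩

/-- `Pyrnc n` is the free category on the graph `G^n`. -/
abbrev Pyrnc (n : ℕ) := Paths (PVert n)

/-- Constructor for vertices. -/
def mkV {n : ℕ} (x y : ℕ) (h : x ≤ y ∧ y ≤ n) : PVert n := ⟨(x, y), h⟩

/-- The path `[x;y] → [x+1;y] → ⋯ → [x+d;y]` of successive left-endpoint increments. -/
def leftPath (m : ℕ) : (d x y : ℕ) → (h : x + d ≤ y) → (hy : y ≤ m) →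
    Quiver.Path (mkV (n := m) x y ⟨by omega, hy⟩) (mkV (x + d) y ⟨h, hy⟩)
  | 0, _, _, _, _ => Quiver.Path.nil
  | d+1, x, y, h, hy =>
      (leftPath m d x y (by omega) hy).cons (PEdge.left _ _ (show x + d < y by omega) rfl rfl)

/-- The path `[x;y] → [x;y-1] → ⋯ → [x;y-d]` of successive right-endpoint decrements. -/
def rightPath (m : ℕ) : (d x y : ℕ) → (h : x + d ≤ y) → (hy : y ≤ m) →
    Quiver.Path (mkV (n := m) x y ⟨by omega, hy⟩) (mkV x (y - d) ⟨by omega, by omega⟩)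
  | 0, _, _, _, _ => Quiver.Path.nil
  | d+1, x, y, h, hy =>
      (rightPath m d x y (by omega) hy).cons (PEdge.right _ _ (show x < y - d by omega) rfl rfl)

/-- The path of successive left-endpoint increments, from `[x;y]` to `[x';y']`
(with `y' = y`). -/
def leftPath' (m x y x' y' : ℕ) (hx : x ≤ x') (h : x' ≤ y) (hy : y ≤ m) (hy' : y' = y) :
    Quiver.Path (mkV (n := m) x y ⟨hx.trans h, hy⟩) (mkV x' y' ⟨by omega, by omega⟩) :=
  (leftPath m (x' - x) x y (by omega) hy).cast rfl (by
    apply Subtype.ext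
    show (x + (x' - x), y) = (x', y')
    rw [Prod.mk.injEq]
    omega)

/-- The path of successive right-endpoint decrements, from `[x;y]` to `[x';y']`
(with `x' = x`). -/
def rightPath' (m x y x' y' : ℕ) (hx' : x' = x) (h : x ≤ y') (hy' : y' ≤ y) (hy : y ≤ m) :
    Quiver.Path (mkV (n := m) x y ⟨h.trans hy', hy⟩) (mkV x' y' ⟨by omega, by omega⟩) :=
  (rightPath m (y - y') x y (by omega) hy).cast rfl (by
    apply Subtype.ext
    show (x, y - (y - y')) = (x', y')
    rw [Prod.mk.injEq]
    omega)

/-- The map on vertices `[a;b] ↦ [φ(a);φ(b)]` induced by a monotone map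
`φ : [n] → [m]`. -/
def vmap {n m : ℕ} (φ : Fin (n+1) →o Fin (m+1)) (v : PVert n) : PVert m :=
  mkV (φ ⟨v.val.1, by have := v.property; omega⟩).val
      (φ ⟨v.val.2, by have := v.property; omega⟩).val
      ⟨φ.monotone (Fin.mk_le_mk.mpr v.property.1), Nat.lt_succ_iff.mp (φ _).isLt⟩

/-- The prefunctor `G^n → Pyrnc m` induced by a monotone map `φ : [n] → [m]`: on
vertices `[a;b] ↦ [φ(a);φ(b)]`; the edge `[a;b] → [a+1;b]` goes to the path
`[φ(a);φ(b)] → [φ(a)+1;φ(b)] → ⋯ → [φ(a+1);φ(b)]` of successive left-endpoint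
increments, and the edge `[a;b] → [a;b-1]` to the path
`[φ(a);φ(b)] → [φ(a);φ(b)-1] → ⋯ → [φ(a);φ(b-1)]` of successive right-endpoint
decrements. -/
def pyrncPre {n m : ℕ} (φ : Fin (n+1) →o Fin (m+1)) : PVert n ⥤q Pyrnc m where
  obj v := vmap φ v
  map {v w} e :=
    match v, w, e with
    | v, w, .left _ _ h h1 h2 =>
        leftPath' m (φ ⟨v.val.1, by have := v.property; omega⟩).val
          (φ ⟨v.val.2, by have := v.property; omega⟩).val
          (φ ⟨w.val.1, by have := w.property; omega⟩).val
          (φ ⟨w.val.2, by have := w.property; omega⟩).val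
          (φ.monotone (Fin.mk_le_mk.mpr (by omega)))
          (φ.monotone (Fin.mk_le_mk.mpr (by omega)))
          (Nat.lt_succ_iff.mp (φ _).isLt)
          (congrArg (fun t : Fin (n+1) => (φ t).val) (Fin.mk_eq_mk.mpr h2))
    | v, w, .right _ _ h h1 h2 =>
        rightPath' m (φ ⟨v.val.1, by have := v.property; omega⟩).val
          (φ ⟨v.val.2, by have := v.property; omega⟩).val
          (φ ⟨w.val.1, by have := w.property; omega⟩).val
          (φ ⟨w.val.2, by have := w.property; omega⟩).val
          (congrArg (fun t : Fin (n+1) => (φ t).val) (Fin.mk_eq_mk.mpr h1))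
          (φ.monotone (Fin.mk_le_mk.mpr (by omega)))
          (φ.monotone (Fin.mk_le_mk.mpr (by omega)))
          (Nat.lt_succ_iff.mp (φ _).isLt)

/-- The functor `Pyrnc(φ) : Pyrnc n ⥤ Pyrnc m` induced by a monotone map
`φ : [n] → [m]`. -/
def PyrncMap {n m : ℕ} (φ : Fin (n+1) →o Fin (m+1)) : Pyrnc n ⥤ Pyrnc m :=
  Paths.lift (pyrncPre φ)

/-! Both sides of each identity agree on vertices, and each generating edge of `G^n` is sent to a
path between two intervals sharing their left or their right endpoint. Such a path is unique:
along a path the left endpoint never decreases and the right endpoint never increases, so a path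
that keeps one endpoint fixed consists of edges of a single kind, and is determined by its ends. -/

namespace PVert

variable {n : ℕ}

def Aligned (v w : PVert n) : Prop := v.val.1 = w.val.1 ∨ v.val.2 = w.val.2

lemma fst_le_and_snd_le_of_path {v w : PVert n} (p : Quiver.Path v w) :
    v.val.1 ≤ w.val.1 ∧ w.val.2 ≤ v.val.2 := by
  induction p with
  | nil => exact ⟨le_rfl, le_rfl⟩
  | cons _ e ih =>
    change PEdge n _ _ at e
    cases e <;> omega

lemma path_self_eq_nil {v : PVert n} (p : Quiver.Path v v) : p = .nil := by
  cases p with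
  | nil => rfl
  | cons p e =>
    have := fst_le_and_snd_le_of_path p
    change PEdge n _ _ at e
    cases e <;> omega

/-- A left and a right edge into `[a;b]` have sources `[a-1;b]` and `[a;b+1]`, which are not
aligned. -/
lemma sigma_edge_eq_of_aligned {u u' w : PVert n} (e : u ⟶ w) (e' : u' ⟶ w)
    (h : Aligned u u') : (⟨u, e⟩ : Σ u, u ⟶ w) = ⟨u', e'⟩ := by
  change PEdge n _ _ at e e'
  cases e <;> cases e' <;>
    first
    | (obtain rfl : u = u' := Subtype.ext (Prod.ext (by omega) (by omega)); rfl)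
    | (exfalso; unfold Aligned at h; omega)

theorem path_eq_of_aligned {v w : PVert n} (h : Aligned v w) (p q : Quiver.Path v w) :
    p = q := by
  induction p with
  | nil => exact (path_self_eq_nil q).symm
  | @cons u w p e ih =>
    cases q with
    | nil => exact path_self_eq_nil _
    | @cons u' _ q e' =>
      have hp := fst_le_and_snd_le_of_path p
      have hq := fst_le_and_snd_le_of_path q
      have he := fst_le_and_snd_le_of_path e.toPath
      have he' := fst_le_and_snd_le_of_path e'.toPath
      obtain ⟨rfl, rfl⟩ : (⟨u, e⟩ : Σ u, u ⟶ w) = ⟨u', e'⟩ :=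
        sigma_edge_eq_of_aligned e e' (by unfold Aligned at h ⊢; omega)
      rw [ih (by unfold Aligned at h ⊢; omega) q]

end PVert

lemma Pyrnc.functor_ext {n m : ℕ} {F G : Pyrnc n ⥤ Pyrnc m} (h_obj : F.obj = G.obj)
    (h_aligned : ∀ (v w : PVert n), (v ⟶ w) → (F.obj v).Aligned (F.obj w)) : F = G :=
  Paths.ext_functor h_obj fun v w e => PVert.path_eq_of_aligned (h_aligned v w e) _ _

lemma vmap_aligned_of_edge {n m : ℕ} (φ : Fin (n+1) →o Fin (m+1)) {v w : PVert n}
    (e : v ⟶ w) : (vmap φ v).Aligned (vmap φ w) := by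
  change PEdge n _ _ at e
  cases e with
  | left _ _ h => exact .inr (congrArg (fun t => (φ t).val) (Fin.ext h.symm))
  | right _ h _ => exact .inl (congrArg (fun t => (φ t).val) (Fin.ext h.symm))

theorem pyrncMap_id (n : ℕ) : PyrncMap (OrderHom.id : Fin (n+1) →o Fin (n+1)) = 𝟭 (Pyrnc n) :=
  Pyrnc.functor_ext rfl fun _ _ => vmap_aligned_of_edge _

theorem pyrncMap_comp {n m l : ℕ} (φ : Fin (n+1) →o Fin (m+1)) (ψ : Fin (m+1) →o Fin (l+1)) :
    PyrncMap (ψ.comp φ) = PyrncMap φ ⋙ PyrncMap ψ :=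
  Pyrnc.functor_ext rfl fun _ _ => vmap_aligned_of_edge _

def pyrncFunctor : SimplexCategory ⥤ Cat where
  obj x := Cat.of (Pyrnc x.len)
  map f := (PyrncMap f.toOrderHom).toCatHom
  map_id x := congrArg Functor.toCatHom (pyrncMap_id x.len)
  map_comp f g := congrArg Functor.toCatHom (pyrncMap_comp f.toOrderHom g.toOrderHom)

/-- The assignments `[n] ↦ Pyrnc(n)` (the free category on the graph
`G^n` of intervals of `[n]`) and `φ ↦ Pyrnc(φ)` are functorial: `Pyrnc(id) = 𝟭`, and
`Pyrnc(ψ ∘ φ) = Pyrnc(φ) ⋙ Pyrnc(ψ)`; hence they define a functor from the simplex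
category `Δ` to the category `Cat` of small categories. -/
theorem statement14 :
    (∀ n : ℕ, PyrncMap (OrderHom.id : Fin (n+1) →o Fin (n+1)) = 𝟭 (Pyrnc n)) ∧
    (∀ (n m l : ℕ) (φ : Fin (n+1) →o Fin (m+1)) (ψ : Fin (m+1) →o Fin (l+1)),
      PyrncMap (ψ.comp φ) = PyrncMap φ ⋙ PyrncMap ψ) ∧
    (∃ (P : SimplexCategory ⥤ Cat)
        (hobj : ∀ n : ℕ, P.obj (SimplexCategory.mk n) = Cat.of (Pyrnc n)),
      ∀ (n m : ℕ) (f : SimplexCategory.mk n ⟶ SimplexCategory.mk m),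
        P.map f = eqToHom (hobj n) ≫
          ((PyrncMap f.toOrderHom).toCatHom : Cat.of (Pyrnc n) ⟶ Cat.of (Pyrnc m)) ≫
          eqToHom (hobj m).symm) := by
  refine ⟨pyrncMap_id, fun _ _ _ => pyrncMap_comp, pyrncFunctor, fun _ => rfl, fun n m f => ?_⟩
  rfl
end
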